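/- arXiv:0909.3877 — 3 statements merged into one kernel-verified Lean document; each statement's English description precedes it below -/
import Mathlib

section
/- Every pair of distinct vertices of G₂ that is not joined by a path of at most 2 edges consists of the vertex x together with a vertex of U₁ ∪ U₂. -/
/-- The vertex set of the construction `G₂` built from a graph `G₁` on vertex set `V`:
`u w` for `w ∈ U₁ ∪ U₂` (`Sum.inl` = copy in `U₁`, `Sum.inr` = copy in `U₂`),
`y p` for each unordered pair `p` of distinct vertices of `U₁ ∪ U₂`,
plus the two special vertices `z` and `x`. -/
inductive V2 (V : Type u) : Type u where
  | u : V ⊕ V → V2 V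
  | y : {p : Sym2 (V ⊕ V) // ¬ p.IsDiag} → V2 V
  | z : V2 V
  | x : V2 V

/-- The `Y`-vertex `y(a,b)` corresponding to an unordered pair `{a, b}` of distinct
vertices of `U₁ ∪ U₂`. -/
def yv {V : Type u} (a b : V ⊕ V) (h : a ≠ b) : V2 V :=
  V2.y ⟨s(a, b), by simpa using h⟩

/-- The base (pre-symmetrization) edge relation of `G₂`: copies of the edges of `G₁`
inside `U₁` and inside `U₂`, the twin edges, `Y` a clique, each `y(a,b)` joined to
`a` and `b`, `z` joined to all of `Y`, and the edge `zx`. -/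
def baseRel {V : Type u} (G : SimpleGraph V) : V2 V → V2 V → Prop
  | .u (Sum.inl a), .u (Sum.inl b) => G.Adj a b
  | .u (Sum.inr a), .u (Sum.inr b) => G.Adj a b
  | .u (Sum.inl a), .u (Sum.inr b) => a = b
  | .u w, .y p => w ∈ p.1
  | .y _, .y _ => True
  | .z, .y _ => True
  | .z, .x => True
  | _, _ => False

/-- The graph `G₂` built from `G₁ = G`. -/
def G₂ {V : Type u} (G : SimpleGraph V) : SimpleGraph (V2 V) :=
  SimpleGraph.fromRel (baseRel G)

/-- A graph has diameter at most `D` if every pair of distinct vertices is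
joined by a path (walk) with at most `D` edges. -/
def hasDiamLE {α : Type u} (H : SimpleGraph α) (D : ℕ) : Prop :=
  ∀ a b : α, a ≠ b → ∃ w : H.Walk a b, w.length ≤ D

/-- `D` is a dominating set of `G`: every vertex not in `D` is adjacent to a vertex of `D`. -/
def IsDomSet {V : Type u} (G : SimpleGraph V) (D : Set V) : Prop :=
  ∀ v ∉ D, ∃ s ∈ D, G.Adj s v

/-- The graph obtained from `H` by adding the set `S` of unordered pairs as edges. -/
def augGraph {α : Type u} (H : SimpleGraph α) (S : Set (Sym2 α)) : SimpleGraph α :=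
  SimpleGraph.fromEdgeSet (H.edgeSet ∪ S)

/-- `S` is a diameter-2 augmenting set for `G₂`: a set of unordered pairs of distinct
vertices that are not edges of `G₂`, whose addition gives a graph of diameter at most 2. -/
def IsAugSet {V : Type u} (G : SimpleGraph V) (S : Set (Sym2 (V2 V))) : Prop :=
  (∀ e ∈ S, ¬ e.IsDiag ∧ e ∉ (G₂ G).edgeSet) ∧ hasDiamLE (augGraph (G₂ G) S) 2

/-! `Y ∪ {z}` is a clique, and every vertex `a` of `U₁ ∪ U₂` is adjacent to the `Y`-vertices
`y(a, c)`. Two vertices `a, b` of `U₁ ∪ U₂` have the common neighbour `y(a, b)`; `a` reaches any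
`y(p)` with `a ∉ p`, and `z`, through `y(a, a')` for its twin `a'`; and `x`, whose only neighbour is
`z`, is within distance `2` of `Y ∪ {z}`. Only the pairs `x, a` remain. -/

lemma Sum.swap_ne_self {α : Type u} (a : α ⊕ α) : a.swap ≠ a := by
  cases a <;> simp

section WithinTwo

variable {α : Type u} {H : SimpleGraph α} {a b c : α}

lemma SimpleGraph.Adj.exists_walk_length_le_two (h : H.Adj a b) :
    ∃ w : H.Walk a b, w.length ≤ 2 :=
  ⟨h.toWalk, by simp⟩

lemma SimpleGraph.Adj.exists_walk_length_le_two_of_adj (h₁ : H.Adj a c) (h₂ : H.Adj c b) :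
    ∃ w : H.Walk a b, w.length ≤ 2 :=
  ⟨.cons h₁ h₂.toWalk, by simp⟩

lemma exists_walk_length_le_two_symm (h : ∃ w : H.Walk a b, w.length ≤ 2) :
    ∃ w : H.Walk b a, w.length ≤ 2 :=
  let ⟨w, hw⟩ := h
  ⟨w.reverse, by simpa using hw⟩

end WithinTwo

section G₂

variable {V : Type u} {G : SimpleGraph V}

lemma G₂_adj_of_baseRel {a b : V2 V} (hne : a ≠ b) (h : baseRel G a b) : (G₂ G).Adj a b := by
  rw [G₂, SimpleGraph.fromRel_adj]
  exact ⟨hne, .inl h⟩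

lemma G₂_adj_u_y {w : V ⊕ V} {p : {p : Sym2 (V ⊕ V) // ¬ p.IsDiag}} (h : w ∈ p.1) :
    (G₂ G).Adj (.u w) (.y p) :=
  G₂_adj_of_baseRel (by simp) (by cases w <;> exact h)

lemma G₂_adj_u_yv_left (a b : V ⊕ V) (h : a ≠ b) : (G₂ G).Adj (.u a) (yv a b h) :=
  G₂_adj_u_y (Sym2.mem_mk_left a b)

lemma G₂_adj_u_yv_right (a b : V ⊕ V) (h : a ≠ b) : (G₂ G).Adj (.u b) (yv a b h) :=
  G₂_adj_u_y (Sym2.mem_mk_right a b)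

lemma G₂_adj_y_y {p q : {p : Sym2 (V ⊕ V) // ¬ p.IsDiag}} (h : p ≠ q) :
    (G₂ G).Adj (.y p) (.y q) :=
  G₂_adj_of_baseRel (by simpa using h) trivial

lemma G₂_adj_z_y (p : {p : Sym2 (V ⊕ V) // ¬ p.IsDiag}) : (G₂ G).Adj .z (.y p) :=
  G₂_adj_of_baseRel (by simp) trivial

lemma G₂_adj_z_x : (G₂ G).Adj .z (.x : V2 V) :=
  G₂_adj_of_baseRel (by simp) trivial

lemma G₂_exists_walk_u_u {a b : V ⊕ V} (h : a ≠ b) :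
    ∃ w : (G₂ G).Walk (.u a) (.u b), w.length ≤ 2 :=
  (G₂_adj_u_yv_left a b h).exists_walk_length_le_two_of_adj (G₂_adj_u_yv_right a b h).symm

lemma G₂_exists_walk_u_y (a : V ⊕ V) (p : {p : Sym2 (V ⊕ V) // ¬ p.IsDiag}) :
    ∃ w : (G₂ G).Walk (.u a) (.y p), w.length ≤ 2 := by
  by_cases ha : a ∈ p.1
  · exact (G₂_adj_u_y ha).exists_walk_length_le_two
  · have hp : p ≠ ⟨s(a, a.swap), by simpa using a.swap_ne_self.symm⟩ := by
      rintro rfl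
      exact ha (Sym2.mem_mk_left _ _)
    exact (G₂_adj_u_yv_left a a.swap a.swap_ne_self.symm).exists_walk_length_le_two_of_adj
      (G₂_adj_y_y hp.symm)

lemma G₂_exists_walk_u_z (a : V ⊕ V) : ∃ w : (G₂ G).Walk (.u a) .z, w.length ≤ 2 :=
  (G₂_adj_u_yv_left a a.swap a.swap_ne_self.symm).exists_walk_length_le_two_of_adj
    (G₂_adj_z_y _).symm

lemma G₂_exists_walk_y_x (p : {p : Sym2 (V ⊕ V) // ¬ p.IsDiag}) :
    ∃ w : (G₂ G).Walk (.y p) .x, w.length ≤ 2 :=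
  (G₂_adj_z_y p).symm.exists_walk_length_le_two_of_adj G₂_adj_z_x

end G₂

theorem stmt1_general {V : Type u} (G : SimpleGraph V) :
    ∀ a b : V2 V, a ≠ b → (¬ ∃ w : (G₂ G).Walk a b, w.length ≤ 2) →
      (a = V2.x ∧ ∃ u : V ⊕ V, b = V2.u u) ∨ (b = V2.x ∧ ∃ u : V ⊕ V, a = V2.u u) := by
  intro a b hne hfar
  match a, b with
  | .u s, .x => exact .inr ⟨rfl, s, rfl⟩
  | .x, .u t => exact .inl ⟨rfl, t, rfl⟩
  | .u s, .u t => exact absurd (G₂_exists_walk_u_u (by simpa using hne)) hfar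
  | .u s, .y p => exact absurd (G₂_exists_walk_u_y s p) hfar
  | .y p, .u t => exact absurd (exists_walk_length_le_two_symm (G₂_exists_walk_u_y t p)) hfar
  | .u s, .z => exact absurd (G₂_exists_walk_u_z s) hfar
  | .z, .u t => exact absurd (exists_walk_length_le_two_symm (G₂_exists_walk_u_z t)) hfar
  | .y p, .y q => exact absurd (G₂_adj_y_y (by simpa using hne)).exists_walk_length_le_two hfar
  | .y p, .z => exact absurd (G₂_adj_z_y p).symm.exists_walk_length_le_two hfar
  | .z, .y q => exact absurd (G₂_adj_z_y q).exists_walk_length_le_two hfar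
  | .y p, .x => exact absurd (G₂_exists_walk_y_x p) hfar
  | .x, .y q => exact absurd (exists_walk_length_le_two_symm (G₂_exists_walk_y_x q)) hfar
  | .z, .x => exact absurd G₂_adj_z_x.exists_walk_length_le_two hfar
  | .x, .z => exact absurd G₂_adj_z_x.symm.exists_walk_length_le_two hfar

theorem stmt1 {V : Type u} [Fintype V] [Nontrivial V] (G : SimpleGraph V)
    (hConn : G.Connected) :
    ∀ a b : V2 V, a ≠ b → (¬ ∃ w : (G₂ G).Walk a b, w.length ≤ 2) →
      (a = V2.x ∧ ∃ u : V ⊕ V, b = V2.u u) ∨ (b = V2.x ∧ ∃ u : V ⊕ V, a = V2.u u) :=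
  stmt1_general G
end

section
/- (Edge-swap Rule 1.) If S is a diameter-2 augmenting set for G₂ containing a pair {z, w} (necessarily with w ∈ U₁ ∪ U₂), then the set S' = (S \ {{z, w}}) ∪ {{x, w}} also makes G₂ + S' have diameter at most 2, and |S'| ≤ |S|. -/
/-
Since `z` is adjacent to `x` and to all of `Y`, a non-edge `{z, w}` has `w ∈ U₁ ∪ U₂`.
In `G₂ - x` any two vertices are already at distance at most 2 (through `z` or a common
`Y`-vertex), so only distances from `x` matter. A path of length at most 2 from `x` that uses
`{z, w}` must be `x z w`, since `x` differs from `z` and `w`; the new edge `xw` replaces it.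
-/

universe u

namespace SimpleGraph

variable {α : Type u} {H : SimpleGraph α} {a b m : α}

lemma Adj.exists_walk_length_le_two_s6 (h : H.Adj a b) : ∃ W : H.Walk a b, W.length ≤ 2 :=
  ⟨h.toWalk, by simp⟩

lemma exists_walk_length_le_two_of_adj_of_adj (h₁ : H.Adj a m) (h₂ : H.Adj m b) :
    ∃ W : H.Walk a b, W.length ≤ 2 :=
  ⟨.cons h₁ h₂.toWalk, by simp⟩

lemma exists_walk_length_le_symm {n : ℕ} :
    (∃ W : H.Walk a b, W.length ≤ n) → ∃ W : H.Walk b a, W.length ≤ n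
  | ⟨W, hW⟩ => ⟨W.reverse, by simpa⟩

lemma Walk.eq_or_adj_or_exists_adj_adj_of_length_le_two :
    ∀ (W : H.Walk a b), W.length ≤ 2 → a = b ∨ H.Adj a b ∨ ∃ m, H.Adj a m ∧ H.Adj m b
  | .nil, _ => .inl rfl
  | .cons h .nil, _ => .inr (.inl h)
  | .cons h₁ (.cons h₂ .nil), _ => .inr (.inr ⟨_, h₁, h₂⟩)
  | .cons _ (.cons _ (.cons _ _)), hW => by simp at hW

end SimpleGraph

open SimpleGraph

lemma Set.ncard_diff_singleton_union_singleton_le {α : Type u} {s : Set α} {a : α} (b : α)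
    (ha : a ∈ s) : (s \ {a} ∪ {b}).ncard ≤ s.ncard := by
  by_cases hs : s.Finite
  · calc (s \ {a} ∪ {b}).ncard ≤ (s \ {a}).ncard + 1 := by
          rw [Set.union_singleton]; exact Set.ncard_insert_le b _
      _ = s.ncard := Set.ncard_sdiff_singleton_add_one ha hs
  · have hinf : (s \ {a} ∪ {b}).Infinite :=
      (Set.Infinite.sdiff hs (Set.finite_singleton a)).mono Set.subset_union_left
    rw [hinf.ncard]
    exact Nat.zero_le _

section augGraph

variable {α : Type u} {H : SimpleGraph α} {S : Set (Sym2 α)}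

lemma augGraph_adj {a b : α} : (augGraph H S).Adj a b ↔ (H.Adj a b ∨ s(a, b) ∈ S) ∧ a ≠ b := by
  simp only [augGraph, fromEdgeSet_adj, Set.mem_union, mem_edgeSet]

lemma le_augGraph : H ≤ augGraph H S :=
  fun _ _ h => augGraph_adj.2 ⟨.inl h, h.ne⟩

theorem hasDiamLE_augGraph_diff_union {x z w : α} (hS : hasDiamLE (augGraph H S) 2)
    (hxz : H.Adj x z) (hxw : x ≠ w)
    (hH : ∀ a b, a ≠ x → b ≠ x → a ≠ b → ∃ W : H.Walk a b, W.length ≤ 2) :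
    hasDiamLE (augGraph H (S \ {s(z, w)} ∪ {s(x, w)})) 2 := by
  set H' := augGraph H (S \ {s(z, w)} ∪ {s(x, w)})
  have keep {a b : α} (h : (augGraph H S).Adj a b) (hab : s(a, b) ≠ s(z, w)) : H'.Adj a b := by
    rw [augGraph_adj] at h ⊢
    exact ⟨h.1.imp_right fun h => .inl ⟨h, hab⟩, h.2⟩
  have fromX (b : α) (hbx : b ≠ x) : ∃ W : H'.Walk x b, W.length ≤ 2 := by
    by_cases hbz : b = z
    · exact hbz ▸ (le_augGraph hxz).exists_walk_length_le_two_s6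
    by_cases hbw : b = w
    · exact hbw ▸ (augGraph_adj.2 ⟨.inr (.inr rfl), hxw⟩).exists_walk_length_le_two_s6
    obtain ⟨W, hW⟩ := hS x b hbx.symm
    rcases W.eq_or_adj_or_exists_adj_adj_of_length_le_two hW with h | h | ⟨m, h₁, h₂⟩
    · exact absurd h.symm hbx
    · exact (keep h (by simp [hxz.ne, hxw])).exists_walk_length_le_two_s6
    · exact exists_walk_length_le_two_of_adj_of_adj (keep h₁ (by simp [hxz.ne, hxw]))
        (keep h₂ (by simp [hbz, hbw]))
  intro a b hab
  by_cases ha : a = x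
  · exact ha ▸ fromX b (ha ▸ hab).symm
  by_cases hb : b = x
  · exact hb ▸ exists_walk_length_le_symm (fromX a (hb ▸ hab))
  obtain ⟨W, hW⟩ := hH a b ha hb hab
  exact ⟨W.mapLe le_augGraph, by simpa⟩

end augGraph

namespace G₂

variable {V : Type u} (G : SimpleGraph V)

lemma adj_iff {a b : V2 V} : (G₂ G).Adj a b ↔ a ≠ b ∧ (baseRel G a b ∨ baseRel G b a) :=
  fromRel_adj _ _ _

lemma adj_z_y (p : {p : Sym2 (V ⊕ V) // ¬ p.IsDiag}) : (G₂ G).Adj .z (.y p) :=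
  (adj_iff G).2 ⟨nofun, .inl trivial⟩

lemma adj_z_x : (G₂ G).Adj .z .x :=
  (adj_iff G).2 ⟨nofun, .inl trivial⟩

lemma adj_y_y {p q : {p : Sym2 (V ⊕ V) // ¬ p.IsDiag}} (h : p ≠ q) : (G₂ G).Adj (.y p) (.y q) :=
  (adj_iff G).2 ⟨by simpa using h, .inl trivial⟩

lemma adj_u_y {a : V ⊕ V} {p : {p : Sym2 (V ⊕ V) // ¬ p.IsDiag}} (h : a ∈ p.1) :
    (G₂ G).Adj (.u a) (.y p) :=
  (adj_iff G).2 ⟨nofun, .inl (by cases a <;> exact h)⟩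

lemma adj_u_yv {a b : V ⊕ V} (h : a ≠ b) : (G₂ G).Adj (.u a) (yv a b h) :=
  adj_u_y G (Sym2.mem_mk_left a b)

lemma exists_walk_z_u (a : V ⊕ V) : ∃ W : (G₂ G).Walk .z (.u a), W.length ≤ 2 :=
  have hswap : a ≠ a.swap := by cases a <;> simp
  exists_walk_length_le_two_of_adj_of_adj (adj_z_y G _) (adj_u_yv G hswap).symm

lemma exists_walk_u_u {a b : V ⊕ V} (h : a ≠ b) : ∃ W : (G₂ G).Walk (.u a) (.u b), W.length ≤ 2 :=
  exists_walk_length_le_two_of_adj_of_adj (adj_u_yv G h) (adj_u_y G (Sym2.mem_mk_right a b)).symm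

lemma exists_walk_u_y (a : V ⊕ V) (p : {p : Sym2 (V ⊕ V) // ¬ p.IsDiag}) :
    ∃ W : (G₂ G).Walk (.u a) (.y p), W.length ≤ 2 := by
  obtain ⟨p, hp⟩ := p
  induction p using Sym2.ind with
  | _ c d =>
    by_cases ha : a ∈ s(c, d)
    · exact (adj_u_y G ha).exists_walk_length_le_two_s6
    obtain ⟨hac, had⟩ : a ≠ c ∧ a ≠ d := by simpa [not_or] using ha
    refine exists_walk_length_le_two_of_adj_of_adj (adj_u_yv G hac) (adj_y_y G ?_)
    simp [hac, had]

theorem exists_walk_length_le_two_of_ne_x {a b : V2 V} (ha : a ≠ .x) (hb : b ≠ .x)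
    (hab : a ≠ b) : ∃ W : (G₂ G).Walk a b, W.length ≤ 2 := by
  cases a <;> cases b
  all_goals first
    | exact absurd rfl ‹_›
    | exact (adj_z_y G _).exists_walk_length_le_two_s6
    | exact (adj_z_y G _).symm.exists_walk_length_le_two_s6
    | exact (adj_y_y G (by simpa using hab)).exists_walk_length_le_two_s6
    | exact exists_walk_z_u G _
    | exact exists_walk_length_le_symm (exists_walk_z_u G _)
    | exact exists_walk_u_y G _ _
    | exact exists_walk_length_le_symm (exists_walk_u_y G _ _)
    | exact exists_walk_u_u G (by simpa using hab)

lemma exists_eq_u_of_not_adj_z {w : V2 V} (hw : w ≠ .z) (h : ¬ (G₂ G).Adj .z w) :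
    ∃ a, w = .u a := by
  cases w with
  | u a => exact ⟨a, rfl⟩
  | y p => exact absurd (adj_z_y G p) h
  | z => exact absurd rfl hw
  | x => exact absurd (adj_z_x G) h

end G₂

theorem stmt6_general {V : Type u} (G : SimpleGraph V)
    (S : Set (Sym2 (V2 V))) (hS : IsAugSet G S)
    (w : V2 V) (hw : s(V2.z, w) ∈ S) :
    (∃ uu : V ⊕ V, w = V2.u uu) ∧
      hasDiamLE (augGraph (G₂ G) ((S \ {s(V2.z, w)}) ∪ {s(V2.x, w)})) 2 ∧
      ((S \ {s(V2.z, w)}) ∪ {s(V2.x, w)}).ncard ≤ S.ncard := by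
  obtain ⟨hSpairs, hSdiam⟩ := hS
  obtain ⟨hdiag, hnonedge⟩ := hSpairs _ hw
  obtain ⟨a, rfl⟩ : ∃ a, w = .u a :=
    G₂.exists_eq_u_of_not_adj_z G (by simpa [eq_comm] using hdiag) hnonedge
  exact ⟨⟨a, rfl⟩,
    hasDiamLE_augGraph_diff_union hSdiam (G₂.adj_z_x G).symm nofun
      fun _ _ => G₂.exists_walk_length_le_two_of_ne_x G,
    Set.ncard_diff_singleton_union_singleton_le _ hw⟩

theorem stmt6 {V : Type u} [Fintype V] [Nontrivial V] (G : SimpleGraph V)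
    (hConn : G.Connected) (S : Set (Sym2 (V2 V))) (hS : IsAugSet G S)
    (w : V2 V) (hw : s(V2.z, w) ∈ S) :
    (∃ uu : V ⊕ V, w = V2.u uu) ∧
      hasDiamLE (augGraph (G₂ G) ((S \ {s(V2.z, w)}) ∪ {s(V2.x, w)})) 2 ∧
      ((S \ {s(V2.z, w)}) ∪ {s(V2.x, w)}).ncard ≤ S.ncard :=
  stmt6_general G S hS w hw
end

section
/- Suppose S is a diameter-2 augmenting set for G₂ each of whose pairs joins x to a vertex of U₁ ∪ U₂ ∪ Y, and suppose every vertex u ∈ U⁺ in fact has all of x's S-neighbors unavailable through Y, i.e. there is no pair {x, y(u,w)} in S. Then every vertex u ∈ U⁺ is adjacent in G₂ to some vertex of U_x. -/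
/-- `U_x`: the vertices `u` of `U₁ ∪ U₂` with `{x, u} ∈ S`. -/
def Ux {V : Type u} (S : Set (Sym2 (V2 V))) : Set (V ⊕ V) :=
  {w | s(V2.x, V2.u w) ∈ S}

/-- `U⁻`: the vertices `u` of `U₁ ∪ U₂` not in `U_x` such that `{x, y(u,w)} ∈ S` for some `w`. -/
def Uminus {V : Type u} (S : Set (Sym2 (V2 V))) : Set (V ⊕ V) :=
  {w | w ∉ Ux S ∧ ∃ w', ∃ h : w ≠ w', s(V2.x, yv w w' h) ∈ S}

/-- `U⁺`: the vertices of `U₁ ∪ U₂` in neither `U_x` nor `U⁻`. -/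
def Uplus {V : Type u} (S : Set (Sym2 (V2 V))) : Set (V ⊕ V) :=
  {w | w ∉ Ux S ∧ w ∉ Uminus S}

/-!
Since `u ∉ U_x`, the vertex `x` is not adjacent to `u` in `G₂ + S`, so diameter 2 yields a common
neighbour `m` of `x` and `u`. Every added pair contains `x`, so `m` reaches `u` through an edge
of `G₂`; this rules out `m = z`, and `m = y(u, w)` would put `{x, y(u, w)}` in `S`. Hence `m` is
a vertex of `U_x`.
-/

namespace SimpleGraph

variable {α : Type*} {H : SimpleGraph α}

theorem Walk.exists_adj_adj_of_length_le_two {a b : α} (w : H.Walk a b) (hw : w.length ≤ 2)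
    (hne : a ≠ b) (hab : ¬ H.Adj a b) : ∃ m, H.Adj a m ∧ H.Adj m b := by
  match w, hw with
  | .nil, _ => exact absurd rfl hne
  | .cons h .nil, _ => exact absurd h hab
  | .cons h₁ (.cons h₂ .nil), _ => exact ⟨_, h₁, h₂⟩
  | .cons _ (.cons _ (.cons _ _)), hw => simp only [Walk.length_cons] at hw; omega

end SimpleGraph

section augGraph

variable {α : Type*} {H : SimpleGraph α} {S : Set (Sym2 α)} {a b : α}

theorem augGraph_adj_iff : (augGraph H S).Adj a b ↔ (H.Adj a b ∨ s(a, b) ∈ S) ∧ a ≠ b := by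
  simp only [augGraph, SimpleGraph.fromEdgeSet_adj, Set.mem_union, SimpleGraph.mem_edgeSet]

theorem mem_of_augGraph_adj (h : (augGraph H S).Adj a b) (hH : ¬ H.Adj a b) : s(a, b) ∈ S :=
  (augGraph_adj_iff.mp h).1.resolve_left hH

theorem augGraph_adj_of_forall_mem {c : α} (hS : ∀ e ∈ S, c ∈ e) (h : (augGraph H S).Adj a b)
    (ha : a ≠ c) (hb : b ≠ c) : H.Adj a b := by
  refine (augGraph_adj_iff.mp h).1.resolve_right fun hab => ?_
  rcases Sym2.mem_iff.mp (hS _ hab) with rfl | rfl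
  exacts [ha rfl, hb rfl]

end augGraph

section G₂

variable {V : Type*} (G : SimpleGraph V)

theorem G₂_adj_x_iff (m : V2 V) : (G₂ G).Adj .x m ↔ m = .z := by
  cases m <;> simp [G₂, baseRel]

theorem G₂_not_adj_z_u (w : V ⊕ V) : ¬ (G₂ G).Adj .z (.u w) := by
  rcases w with w | w <;> simp [G₂, baseRel]

theorem G₂_adj_y_u_iff (p : {p : Sym2 (V ⊕ V) // ¬ p.IsDiag}) (w : V ⊕ V) :
    (G₂ G).Adj (.y p) (.u w) ↔ w ∈ p.1 := by
  rcases w with w | w <;> simp [G₂, baseRel]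

end G₂

theorem exists_yv_eq_of_mem {V : Type*} {p : {p : Sym2 (V ⊕ V) // ¬ p.IsDiag}} {u : V ⊕ V}
    (hu : u ∈ p.1) : ∃ w, ∃ h : u ≠ w, yv u w h = .y p := by
  obtain ⟨w, hw⟩ := Sym2.mem_iff_exists.mp hu
  have hne : u ≠ w := fun h => p.2 (by simp [hw, h])
  exact ⟨w, hne, congrArg V2.y (Subtype.ext hw.symm)⟩

theorem stmt13_general {V : Type u} (G : SimpleGraph V)
    (S : Set (Sym2 (V2 V))) (hS : IsAugSet G S)
    (hall : ∀ e ∈ S, (∃ w : V ⊕ V, e = s(V2.x, V2.u w)) ∨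
      (∃ p : {p : Sym2 (V ⊕ V) // ¬ p.IsDiag}, e = s(V2.x, V2.y p)))
    (hextra : ∀ u ∈ Uplus S, ¬ ∃ w, ∃ h : u ≠ w, s(V2.x, yv u w h) ∈ S) :
    ∀ u ∈ Uplus S, ∃ c ∈ Ux S, (G₂ G).Adj (V2.u u) (V2.u c) := by
  intro u hu
  have hxS : ∀ e ∈ S, V2.x ∈ e := fun e he => by
    rcases hall e he with ⟨_, rfl⟩ | ⟨_, rfl⟩ <;> exact Sym2.mem_mk_left _ _
  have hxu : ¬ (augGraph (G₂ G) S).Adj .x (.u u) := fun h =>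
    hu.1 (mem_of_augGraph_adj h (by simp [G₂_adj_x_iff]))
  obtain ⟨w, hw⟩ := hS.2 .x (.u u) nofun
  obtain ⟨m, hxm, hmu⟩ := w.exists_adj_adj_of_length_le_two hw nofun hxu
  have hmu' := augGraph_adj_of_forall_mem hxS hmu hxm.ne.symm nofun
  cases m with
  | x => exact absurd hxm (SimpleGraph.irrefl _)
  | z => exact absurd hmu' (G₂_not_adj_z_u G u)
  | u c => exact ⟨c, mem_of_augGraph_adj hxm (by simp [G₂_adj_x_iff]), hmu'.symm⟩
  | y p =>
    obtain ⟨w, hne, hy⟩ := exists_yv_eq_of_mem ((G₂_adj_y_u_iff G p u).mp hmu')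
    exact (hextra u hu ⟨w, hne, hy ▸ mem_of_augGraph_adj hxm (by simp [G₂_adj_x_iff])⟩).elim

theorem stmt13 {V : Type u} [Fintype V] [Nontrivial V] (G : SimpleGraph V)
    (hConn : G.Connected) (S : Set (Sym2 (V2 V))) (hS : IsAugSet G S)
    (hall : ∀ e ∈ S, (∃ w : V ⊕ V, e = s(V2.x, V2.u w)) ∨
      (∃ p : {p : Sym2 (V ⊕ V) // ¬ p.IsDiag}, e = s(V2.x, V2.y p)))
    (hextra : ∀ u ∈ Uplus S, ¬ ∃ w, ∃ h : u ≠ w, s(V2.x, yv u w h) ∈ S) :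
    ∀ u ∈ Uplus S, ∃ c ∈ Ux S, (G₂ G).Adj (V2.u u) (V2.u c) :=
  stmt13_general G S hS hall hextra
end
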